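/- arXiv:1205.2773 — 3 statements merged into one kernel-verified Lean document; each statement's English description precedes it below -/
import Mathlib

section
/- Let ζ denote the Riemann zeta function and let η denote the Euler eta function, η(s) := (1 - 2^{1-s})·ζ(s). For every s = σ + it with σ < 1 and ζ(s) ≠ 0, one has Re(η'(s)/η(s)) < Re(ζ'(s)/ζ(s)). -/
open Complex

/-!
Since `η = (1 - 2^(1-s)) ζ`, the logarithmic derivative of `η` is that of `ζ` plus
`log 2 · w / (1 - w)` with `w = 2^(1-s)`. For `Re s < 1` we have `|w| > 1`, and then
`Re (w / (1 - w)) < 0` because `Re (w · conj (1 - w)) = Re w - |w|² ≤ |w| - |w|² < 0`.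
-/

/-- The Euler eta function, `η(s) = (1 - 2^(1-s)) ζ(s)`. -/
noncomputable def eulerEta (s : ℂ) : ℂ :=
  (1 - (2 : ℂ) ^ (1 - s)) * riemannZeta s

theorem re_div_one_sub_neg {w : ℂ} (hw : 1 < ‖w‖) : (w / (1 - w)).re < 0 := by
  have hne : 1 - w ≠ 0 := by
    intro h
    rw [← sub_eq_zero.mp h, norm_one] at hw
    exact lt_irrefl _ hw
  have hnum : w.re * (1 - w).re + w.im * (1 - w).im < 0 := by
    have hre : w.re ≤ ‖w‖ := re_le_norm w
    have hsq : ‖w‖ ^ 2 = w.re * w.re + w.im * w.im := by rw [Complex.sq_norm, normSq_apply]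
    simp only [sub_re, sub_im, one_re, one_im]
    nlinarith
  rw [div_re, ← add_div]
  exact div_neg_of_neg_of_pos hnum (normSq_pos.mpr hne)

theorem one_lt_norm_ofReal_cpow {b : ℝ} (hb : 1 < b) {z : ℂ} (hz : 0 < z.re) :
    1 < ‖(b : ℂ) ^ z‖ := by
  rw [norm_cpow_eq_rpow_re_of_pos (by linarith)]
  exact Real.one_lt_rpow hb hz

theorem hasDerivAt_one_sub_two_cpow_one_sub (s : ℂ) :
    HasDerivAt (fun z : ℂ => 1 - (2 : ℂ) ^ (1 - z)) ((2 : ℂ) ^ (1 - s) * log 2) s := by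
  have hpow : HasDerivAt (fun t : ℂ => (2 : ℂ) ^ t) ((2 : ℂ) ^ (1 - s) * log 2) (1 - s) :=
    (hasStrictDerivAt_const_cpow (Or.inl two_ne_zero)).hasDerivAt
  simpa using (hpow.comp s ((hasDerivAt_id s).const_sub 1)).const_sub 1

theorem re_logDeriv_one_sub_two_cpow_one_sub_neg {s : ℂ} (hs : s.re < 1) :
    (logDeriv (fun z : ℂ => 1 - (2 : ℂ) ^ (1 - z)) s).re < 0 := by
  have hw : 1 < ‖(2 : ℂ) ^ (1 - s)‖ := by
    exact_mod_cast one_lt_norm_ofReal_cpow one_lt_two (z := 1 - s) (by simpa using hs)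
  have hlog2 : log 2 = (Real.log 2 : ℂ) := by
    rw [ofReal_log zero_le_two, ofReal_ofNat]
  rw [logDeriv_apply, (hasDerivAt_one_sub_two_cpow_one_sub s).deriv, hlog2,
    mul_comm, mul_div_assoc, re_ofReal_mul]
  exact mul_neg_of_pos_of_neg (Real.log_pos one_lt_two) (re_div_one_sub_neg hw)

theorem re_log_deriv_eta_lt_zeta (s : ℂ) (hs : s.re < 1) (hζ : riemannZeta s ≠ 0) :
    (deriv eulerEta s / eulerEta s).re <
      (deriv riemannZeta s / riemannZeta s).re := by
  have hfac : 1 - (2 : ℂ) ^ (1 - s) ≠ 0 := by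
    intro h
    have := re_logDeriv_one_sub_two_cpow_one_sub_neg hs
    rw [logDeriv_apply, h, div_zero, zero_re] at this
    exact lt_irrefl _ this
  have hζd : DifferentiableAt ℂ riemannZeta s :=
    differentiableAt_riemannZeta (by rintro rfl; simp at hs)
  change (logDeriv (fun z => (1 - (2 : ℂ) ^ (1 - z)) * riemannZeta z) s).re <
    (logDeriv riemannZeta s).re
  rw [logDeriv_mul s hfac hζ (hasDerivAt_one_sub_two_cpow_one_sub s).differentiableAt hζd,
    add_re]
  linarith [re_logDeriv_one_sub_two_cpow_one_sub_neg hs]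
end

section
/- For every s = σ + it with σ < 1/2 and |t| ≥ 8, one has Re(1/(s-1) + (1/2)·Ψ(s/2 + 1)) - (1/2)·log π > 0. -/
/-!
Write `z = s/2 + 1 = x + iy`, so that `x < 5/4`, `|y| ≥ 4` and `1/(s-1) = (1/2)·(z - 3/2)⁻¹`.

Euler's limit `GammaSeq s n → Γ(s)` is locally uniform on `0 < Re s` (its error is dominated by
`∫ (e^{-t} - (1 - t/n)^n) (t^{a-1} + t^{b-1})` on a strip `a ≤ Re s ≤ b`), so logarithmic
derivatives converge and give Gauss's formula `Ψ(z) = lim (log n - ∑_{j ≤ n} 1/(z + j))`, which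
`Ψ(z + 1) = Ψ(z) + 1/z` extends to all `z ∉ -ℕ`.

Taking real parts with `e = Re z ≥ 0`, each term `(e+j)/((e+j)² + y²)` is at most
`(e+j)/((e+j)² + 16)`. The first five are bounded one by one, the others by the integral of the
decreasing function `t/(t² + 16)`, which is `log(t² + 16)/2`; this leaves
`Re Ψ(z) ≥ log((e+4)² + 16)/2 - ∑_{i<5} (e+i)/((e+i)² + 16)`, and this exceeds `log π + 3/32`
for `0 ≤ e ≤ 5/4`. When `x < 0`, one first passes from `z` to `z + ⌈-x⌉`: the real parts of the
inverses picked up on the way are non-positive, and the first of them, `-x/(x² + y²)`, absorbs the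
contribution of `1/(s-1)` up to `3/(2y²) ≤ 3/32`.
-/

open Complex Real

/-- The digamma function `Ψ(s) = Γ'(s)/Γ(s)`. -/
noncomputable def digamma (s : ℂ) : ℂ :=
  deriv Complex.Gamma s / Complex.Gamma s

open Filter Topology Set MeasureTheory

lemma Real.rpow_le_rpow_add_rpow {x a b c : ℝ} (hx : 0 < x) (hac : a ≤ c) (hcb : c ≤ b) :
    x ^ c ≤ x ^ a + x ^ b := by
  rcases le_total x 1 with hx1 | hx1
  · linarith [Real.rpow_le_rpow_of_exponent_ge hx hx1 hac, Real.rpow_nonneg hx.le b]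
  · linarith [Real.rpow_le_rpow_of_exponent_le hx1 hcb, Real.rpow_nonneg hx.le a]

namespace Complex

noncomputable def eulerKernel (n : ℕ) : ℝ → ℝ :=
  (Ioc 0 (n : ℝ)).indicator fun x ↦ (1 - x / n) ^ n

lemma eulerKernel_nonneg (n : ℕ) (x : ℝ) : 0 ≤ eulerKernel n x := by
  refine indicator_nonneg (fun x hx ↦ pow_nonneg ?_ n) x
  rw [sub_nonneg]
  exact div_le_one_of_le₀ hx.2 n.cast_nonneg

lemma eulerKernel_le_exp_neg (n : ℕ) (x : ℝ) : eulerKernel n x ≤ Real.exp (-x) :=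
  indicator_apply_le' (fun hx ↦ one_sub_div_pow_le_exp_neg hx.2) fun _ ↦ (Real.exp_pos _).le

lemma measurable_eulerKernel (n : ℕ) : Measurable (eulerKernel n) :=
  (by fun_prop : Measurable fun x : ℝ ↦ (1 - x / n) ^ n).indicator measurableSet_Ioc

lemma tendsto_eulerKernel {x : ℝ} (hx : 0 < x) :
    Tendsto (fun n ↦ eulerKernel n x) atTop (𝓝 (Real.exp (-x))) := by
  refine (Real.tendsto_one_add_div_pow_exp (-x)).congr' ?_
  filter_upwards [eventually_ge_atTop ⌈x⌉₊] with n hn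
  rw [eulerKernel, indicator_of_mem (show x ∈ Ioc 0 (n : ℝ) from ⟨hx, Nat.ceil_le.mp hn⟩),
    neg_div, ← sub_eq_add_neg]

lemma GammaSeq_eq_integral_eulerKernel {s : ℂ} (hs : 0 < s.re) {n : ℕ} (hn : n ≠ 0) :
    GammaSeq s n = ∫ x in Ioi 0, (eulerKernel n x : ℂ) * (x : ℂ) ^ (s - 1) := by
  have hK (x : ℝ) : (eulerKernel n x : ℂ) * (x : ℂ) ^ (s - 1) = (Ioc 0 (n : ℝ)).indicator
      (fun x : ℝ ↦ ((1 - x / n) ^ n : ℝ) * (x : ℂ) ^ (s - 1)) x := by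
    by_cases hx : x ∈ Ioc 0 (n : ℝ) <;> simp [eulerKernel, hx]
  simp_rw [hK]
  rw [GammaSeq_eq_approx_Gamma_integral hs hn, intervalIntegral.integral_of_le n.cast_nonneg,
    integral_indicator measurableSet_Ioc, Measure.restrict_restrict_of_subset Ioc_subset_Ioi_self]

lemma tendsto_integral_exp_neg_sub_eulerKernel_mul {w : ℝ → ℝ} (hw : Measurable w)
    (hint : IntegrableOn (fun x ↦ Real.exp (-x) * w x) (Ioi 0)) :
    Tendsto (fun n : ℕ ↦ ∫ x in Ioi 0, (Real.exp (-x) - eulerKernel n x) * w x) atTop (𝓝 0) := by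
  have hmeas (n : ℕ) : Measurable fun x ↦ (Real.exp (-x) - eulerKernel n x) * w x := by
    have := measurable_eulerKernel n
    fun_prop
  have hbound (n : ℕ) (x : ℝ) :
      ‖(Real.exp (-x) - eulerKernel n x) * w x‖ ≤ ‖Real.exp (-x) * w x‖ := by
    rw [norm_mul, norm_mul, Real.norm_of_nonneg (sub_nonneg.2 (eulerKernel_le_exp_neg n x)),
      Real.norm_of_nonneg (Real.exp_pos _).le]
    gcongr
    exact sub_le_self _ (eulerKernel_nonneg n x)
  have hlim : ∀ᵐ x ∂volume.restrict (Ioi 0),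
      Tendsto (fun n ↦ (Real.exp (-x) - eulerKernel n x) * w x) atTop (𝓝 0) := by
    filter_upwards [ae_restrict_mem measurableSet_Ioi] with x hx
    simpa using ((tendsto_eulerKernel hx).const_sub (Real.exp (-x))).mul_const (w x)
  simpa using tendsto_integral_of_dominated_convergence _
    (fun n ↦ (hmeas n).aestronglyMeasurable) hint.norm (fun n ↦ ae_of_all _ (hbound n)) hlim

lemma norm_Gamma_sub_GammaSeq_le {a b : ℝ} {s : ℂ} (ha : 0 < a) (has : a ≤ s.re)
    (hsb : s.re ≤ b) {n : ℕ} (hn : n ≠ 0) :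
    ‖Gamma s - GammaSeq s n‖ ≤
      ∫ x in Ioi 0, (Real.exp (-x) - eulerKernel n x) * (x ^ (a - 1) + x ^ (b - 1)) := by
  have hs : 0 < s.re := ha.trans_le has
  have hgap (x : ℝ) : 0 ≤ Real.exp (-x) - eulerKernel n x :=
    sub_nonneg.2 (eulerKernel_le_exp_neg n x)
  have hnorm {x : ℝ} (hx : 0 < x) (r : ℝ) :
      ‖(r : ℂ) * (x : ℂ) ^ (s - 1)‖ = |r| * x ^ (s.re - 1) := by
    rw [norm_mul, norm_real, Real.norm_eq_abs, norm_cpow_eq_rpow_re_of_pos hx, sub_re, one_re]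
  have hΓ : IntegrableOn (fun x : ℝ ↦ (Real.exp (-x) : ℂ) * (x : ℂ) ^ (s - 1)) (Ioi 0) :=
    GammaIntegral_convergent hs
  have hmeas := measurable_eulerKernel n
  have hK : IntegrableOn (fun x ↦ (eulerKernel n x : ℂ) * (x : ℂ) ^ (s - 1)) (Ioi 0) := by
    refine Integrable.mono hΓ (by fun_prop) ?_
    filter_upwards [ae_restrict_mem measurableSet_Ioi] with x hx
    rw [hnorm hx, hnorm hx, abs_of_nonneg (eulerKernel_nonneg n x),
      abs_of_nonneg (Real.exp_pos _).le]
    gcongr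
    · exact Real.rpow_nonneg hx.le _
    · exact eulerKernel_le_exp_neg n x
  have hbound : IntegrableOn
      (fun x ↦ (Real.exp (-x) - eulerKernel n x) * (x ^ (a - 1) + x ^ (b - 1))) (Ioi 0) := by
    refine Integrable.mono ((Real.GammaIntegral_convergent ha).add
      (Real.GammaIntegral_convergent (ha.trans_le (has.trans hsb)))) (by fun_prop) ?_
    filter_upwards [ae_restrict_mem measurableSet_Ioi] with x (hx : 0 < x)
    rw [Pi.add_apply, ← mul_add, norm_mul, norm_mul, Real.norm_of_nonneg (hgap x),
      Real.norm_of_nonneg (Real.exp_pos _).le]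
    gcongr
    exact sub_le_self _ (eulerKernel_nonneg n x)
  rw [Gamma_eq_integral hs, GammaIntegral, GammaSeq_eq_integral_eulerKernel hs hn,
    ← integral_sub hΓ hK]
  refine norm_integral_le_of_norm_le hbound ?_
  filter_upwards [ae_restrict_mem measurableSet_Ioi] with x (hx : 0 < x)
  rw [← sub_mul, ← ofReal_sub, hnorm hx, abs_of_nonneg (hgap x)]
  gcongr
  · exact hgap x
  · exact Real.rpow_le_rpow_add_rpow hx (by linarith) (by linarith)

theorem tendstoLocallyUniformlyOn_GammaSeq :
    TendstoLocallyUniformlyOn (fun n s ↦ GammaSeq s n) Gamma atTop {s | 0 < s.re} := by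
  refine tendstoLocallyUniformlyOn_of_forall_exists_nhds fun s₀ (hs₀ : 0 < s₀.re) ↦ ?_
  set a := s₀.re / 2
  set b := s₀.re + 1
  have ha : 0 < a := by positivity
  refine ⟨re ⁻¹' Icc a b, mem_nhdsWithin_of_mem_nhds <| continuous_re.continuousAt.preimage_mem_nhds
    (Icc_mem_nhds (half_lt_self hs₀) (lt_add_one _)), ?_⟩
  have hw : IntegrableOn (fun x ↦ Real.exp (-x) * (x ^ (a - 1) + x ^ (b - 1))) (Ioi 0) := by
    simp_rw [mul_add]
    exact (Real.GammaIntegral_convergent ha).add (Real.GammaIntegral_convergent (by positivity))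
  have hlim := tendsto_integral_exp_neg_sub_eulerKernel_mul (by fun_prop) hw
  rw [Metric.tendstoUniformlyOn_iff]
  intro ε hε
  filter_upwards [hlim.eventually (gt_mem_nhds hε), eventually_ne_atTop 0] with n hn hn0 s hs
  rw [dist_eq_norm]
  exact (norm_Gamma_sub_GammaSeq_le ha hs.1 hs.2 hn0).trans_lt hn

lemma ne_neg_natCast_of_re_pos {s : ℂ} (hs : 0 < s.re) (m : ℕ) : s ≠ -m := by
  rintro rfl
  simp only [neg_re, natCast_re, Left.neg_pos_iff] at hs
  exact (Nat.cast_nonneg m).not_gt hs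

lemma ne_neg_natCast_of_im_ne_zero {s : ℂ} (hs : s.im ≠ 0) (m : ℕ) : s ≠ -m := by
  rintro rfl
  simp at hs

lemma prod_add_natCast_ne_zero {s : ℂ} (hs : ∀ m : ℕ, s ≠ -m) (n : ℕ) :
    ∏ j ∈ Finset.range n, (s + j) ≠ 0 :=
  Finset.prod_ne_zero_iff.2 fun j _ ↦ by simpa [add_eq_zero_iff_eq_neg] using hs j

lemma differentiableAt_GammaSeq {s : ℂ} (hs : ∀ m : ℕ, s ≠ -m) {n : ℕ} (hn : n ≠ 0) :
    DifferentiableAt ℂ (fun z ↦ GammaSeq z n) s := by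
  have hn' : (n : ℂ) ≠ 0 := Nat.cast_ne_zero.2 hn
  unfold GammaSeq
  refine DifferentiableAt.div (by fun_prop (disch := exact Or.inl hn')) (by fun_prop)
    (prod_add_natCast_ne_zero hs _)

lemma logDeriv_GammaSeq {s : ℂ} (hs : ∀ m : ℕ, s ≠ -m) {n : ℕ} (hn : n ≠ 0) :
    logDeriv (fun z ↦ GammaSeq z n) s = log n - ∑ j ∈ Finset.range (n + 1), (s + j)⁻¹ := by
  have hn' : (n : ℂ) ≠ 0 := Nat.cast_ne_zero.2 hn
  have hnum : logDeriv (fun z ↦ (n : ℂ) ^ z * n.factorial) s = log n := by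
    rw [logDeriv_mul_const _ _ (by exact_mod_cast n.factorial_ne_zero), logDeriv_apply,
      ((hasStrictDerivAt_const_cpow (Or.inl hn')).hasDerivAt).deriv]
    exact mul_div_cancel_left₀ _ (by simp [cpow_eq_zero_iff, hn'])
  have hden : logDeriv (fun z : ℂ ↦ ∏ j ∈ Finset.range (n + 1), (z + j)) s =
      ∑ j ∈ Finset.range (n + 1), (s + j)⁻¹ := by
    rw [logDeriv_prod (fun j _ ↦ by simpa [add_eq_zero_iff_eq_neg] using hs j) (by fun_prop)]
    refine Finset.sum_congr rfl fun j _ ↦ ?_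
    simp [logDeriv_apply]
  unfold GammaSeq
  rw [logDeriv_div s (by simp [cpow_eq_zero_iff, hn', n.factorial_ne_zero])
    (prod_add_natCast_ne_zero hs _) (by fun_prop (disch := exact Or.inl hn')) (by fun_prop),
    hnum, hden]

theorem tendsto_log_sub_sum_inv_digamma_of_re_pos {s : ℂ} (hs : 0 < s.re) :
    Tendsto (fun n : ℕ ↦ log n - ∑ j ∈ Finset.range (n + 1), (s + j)⁻¹) atTop
      (𝓝 (digamma s)) := by
  refine (logDeriv_tendsto (isOpen_lt continuous_const continuous_re) hs
    tendstoLocallyUniformlyOn_GammaSeq ?_ (Gamma_ne_zero_of_re_pos hs)).congr' ?_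
  · filter_upwards [eventually_ne_atTop 0] with n hn z hz
    exact (differentiableAt_GammaSeq (ne_neg_natCast_of_re_pos hz) hn).differentiableWithinAt
  · filter_upwards [eventually_ne_atTop 0] with n hn
    exact logDeriv_GammaSeq (ne_neg_natCast_of_re_pos hs) hn

lemma tendsto_inv_add_natCast (s : ℂ) : Tendsto (fun n : ℕ ↦ (s + n)⁻¹) atTop (𝓝 0) := by
  refine tendsto_inv₀_cobounded.comp (tendsto_norm_atTop_iff_cobounded.1 ?_)
  refine tendsto_atTop_mono (fun n ↦ ?_)
    (tendsto_atTop_add_const_left _ s.re tendsto_natCast_atTop_atTop)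
  simpa using re_le_norm (s + n)

theorem tendsto_log_sub_sum_inv_digamma {s : ℂ} (hs : ∀ m : ℕ, s ≠ -m) :
    Tendsto (fun n : ℕ ↦ log n - ∑ j ∈ Finset.range (n + 1), (s + j)⁻¹) atTop
      (𝓝 (digamma s)) := by
  obtain ⟨k, hk⟩ := exists_nat_gt (-s.re)
  induction k generalizing s with
  | zero => exact tendsto_log_sub_sum_inv_digamma_of_re_pos (by simpa using hk)
  | succ k ih =>
    have hs₁ : ∀ m : ℕ, s + 1 ≠ -m := fun m h ↦ hs (m + 1) (by push_cast; linear_combination h)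
    have h := ih hs₁ (by simp only [add_re, one_re]; push_cast at hk; linarith)
    rw [digamma_apply_add_one s hs] at h
    have h' := (h.add (tendsto_inv_add_natCast (s + 1))).sub_const s⁻¹
    rw [add_zero, add_sub_cancel_right] at h'
    refine h'.congr fun n ↦ ?_
    rw [Finset.sum_range_succ (fun j : ℕ ↦ (s + 1 + j)⁻¹),
      Finset.sum_range_succ' (fun j : ℕ ↦ (s + j)⁻¹)]
    simp only [Nat.cast_add, Nat.cast_one, Nat.cast_zero, add_zero, ← add_assoc,
      add_right_comm s _ (1 : ℂ)]
    ring

lemma digamma_add_nat {s : ℂ} (hs : ∀ m : ℕ, s ≠ -m) (k : ℕ) :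
    digamma (s + k) = digamma s + ∑ j ∈ Finset.range k, (s + j)⁻¹ := by
  induction k with
  | zero => simp
  | succ k ih =>
    have hsk : ∀ m : ℕ, s + k ≠ -m := fun m h ↦ hs (m + k) (by push_cast; linear_combination h)
    rw [Nat.cast_succ, ← add_assoc, digamma_apply_add_one _ hsk, ih,
      Finset.sum_range_succ, add_assoc]

lemma inv_re_eq_div (w : ℂ) : (w⁻¹).re = w.re / (w.re ^ 2 + w.im ^ 2) := by
  rw [inv_re, normSq_apply, sq, sq]

end Complex

lemma monotoneOn_div_sq_add_sixteen : MonotoneOn (fun u : ℝ ↦ u / (u ^ 2 + 16)) (Icc 0 4) := by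
  intro u hu v hv huv
  dsimp only
  rw [div_le_div_iff₀ (by positivity) (by positivity)]
  nlinarith [mul_nonneg (sub_nonneg.2 huv) (mul_nonneg hu.1 hv.1),
    mul_le_mul hu.2 hv.2 hv.1 (by norm_num : (0 : ℝ) ≤ 4)]

lemma antitoneOn_div_sq_add_sixteen : AntitoneOn (fun u : ℝ ↦ u / (u ^ 2 + 16)) (Ici 4) := by
  intro u (hu : 4 ≤ u) v (hv : 4 ≤ v) huv
  dsimp only
  rw [div_le_div_iff₀ (by positivity) (by positivity)]
  nlinarith [mul_nonneg (sub_nonneg.2 huv)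
    (sub_nonneg.2 (mul_le_mul hu hv (by norm_num) (by linarith)))]

lemma div_sq_add_sixteen_le (u : ℝ) : u / (u ^ 2 + 16) ≤ 1 / 8 := by
  rw [div_le_div_iff₀ (by positivity) (by norm_num)]
  nlinarith [sq_nonneg (u - 4)]

lemma integral_div_sq_add (a b : ℝ) {c : ℝ} (hc : 0 < c) :
    ∫ t in a..b, t / (t ^ 2 + c) = (Real.log (b ^ 2 + c) - Real.log (a ^ 2 + c)) / 2 := by
  rw [sub_div, intervalIntegral.integral_eq_sub_of_hasDerivAt
    (f := fun t ↦ Real.log (t ^ 2 + c) / 2)]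
  · intro t _
    refine ((((hasDerivAt_pow 2 t).add_const c).log (by positivity)).div_const 2).congr_deriv ?_
    norm_num
    ring
  · exact (continuous_id.div (by fun_prop) fun t ↦ by positivity).intervalIntegrable _ _

lemma sum_div_sq_add_sixteen_le_log {a : ℝ} (ha : 4 ≤ a) (k : ℕ) :
    ∑ i ∈ Finset.range k, (a + (i + 1 : ℕ)) / ((a + (i + 1 : ℕ)) ^ 2 + 16) ≤
      (Real.log ((a + k) ^ 2 + 16) - Real.log (a ^ 2 + 16)) / 2 := by
  rw [← integral_div_sq_add _ _ (by norm_num : (0 : ℝ) < 16)]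
  exact (antitoneOn_div_sq_add_sixteen.mono fun t ht ↦ ha.trans ht.1).sum_le_integral

lemma sum_range_div_sq_add_le {e y : ℝ} (he : 0 ≤ e) (hy : 16 ≤ y ^ 2) {n : ℕ} (hn : 4 ≤ n) :
    ∑ j ∈ Finset.range (n + 1), (e + j) / ((e + j) ^ 2 + y ^ 2) ≤
      ∑ i ∈ Finset.range 5, (e + i) / ((e + i) ^ 2 + 16) +
        (Real.log ((e + n) ^ 2 + 16) - Real.log ((e + 4) ^ 2 + 16)) / 2 := by
  obtain ⟨k, rfl⟩ := Nat.exists_eq_add_of_le hn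
  have hy' {u : ℝ} (hu : 0 ≤ u) : u / (u ^ 2 + y ^ 2) ≤ u / (u ^ 2 + 16) := by gcongr
  rw [show 4 + k + 1 = 5 + k by ring, Finset.sum_range_add]
  gcongr ?_ + ?_
  · exact Finset.sum_le_sum fun i _ ↦ hy' (by positivity)
  · calc _ ≤ ∑ i ∈ Finset.range k,
            (e + 4 + (i + 1 : ℕ)) / ((e + 4 + (i + 1 : ℕ)) ^ 2 + 16) := by
          refine Finset.sum_le_sum fun i _ ↦ ?_
          rw [show e + ((5 + i : ℕ) : ℝ) = e + 4 + (i + 1 : ℕ) by push_cast; ring]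
          exact hy' (by positivity)
      _ ≤ _ := sum_div_sq_add_sixteen_le_log (by linarith) k
      _ = _ := by push_cast; rw [add_assoc]

lemma tendsto_log_sub_half_log_sq_add (c : ℝ) {d : ℝ} (hd : 0 < d) :
    Tendsto (fun n : ℕ ↦ Real.log n - Real.log ((c + n) ^ 2 + d) / 2) atTop (𝓝 0) := by
  have h0 : Tendsto (fun n : ℕ ↦ (n : ℝ)⁻¹) atTop (𝓝 0) :=
    tendsto_inv_atTop_zero.comp tendsto_natCast_atTop_atTop
  have h : Tendsto (fun n : ℕ ↦ (1 + c * (n : ℝ)⁻¹) ^ 2 + d * (n : ℝ)⁻¹ ^ 2) atTop (𝓝 1) := by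
    simpa using (((tendsto_const_nhds (x := (1 : ℝ))).add (h0.const_mul c)).pow 2).add
      ((h0.pow 2).const_mul d)
  have hlog := (((Real.continuousAt_log one_ne_zero).tendsto.comp h).div_const 2).neg
  rw [Real.log_one, zero_div, neg_zero] at hlog
  refine hlog.congr' ?_
  filter_upwards [eventually_ne_atTop 0] with n hn
  have hn' : (0 : ℝ) < n := by positivity
  rw [Function.comp_apply,
    show (1 + c * (n : ℝ)⁻¹) ^ 2 + d * (n : ℝ)⁻¹ ^ 2 = ((c + n) ^ 2 + d) / n ^ 2 by
      field_simp; ring,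
    Real.log_div (by positivity) (by positivity), Real.log_pow]
  push_cast
  ring

noncomputable def digammaLowerBound (e : ℝ) : ℝ :=
  Real.log ((e + 4) ^ 2 + 16) / 2 - ∑ i ∈ Finset.range 5, (e + i) / ((e + i) ^ 2 + 16)

lemma digammaLowerBound_le_re_digamma {w : ℂ} (hre : 0 ≤ w.re) (him : 16 ≤ w.im ^ 2) :
    digammaLowerBound w.re ≤ (Complex.digamma w).re := by
  have hw := Complex.ne_neg_natCast_of_im_ne_zero (s := w) fun h ↦ by norm_num [h] at him
  have hlim := (continuous_re.tendsto _).comp (Complex.tendsto_log_sub_sum_inv_digamma hw)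
  have hB := (tendsto_log_sub_half_log_sq_add w.re (by norm_num : (0 : ℝ) < 16)).const_add
    (digammaLowerBound w.re)
  rw [add_zero] at hB
  refine le_of_tendsto_of_tendsto hB hlim ?_
  filter_upwards [eventually_ge_atTop 4] with n hn
  have hsum := sum_range_div_sq_add_le hre him hn
  simp only [Function.comp_apply, sub_re, re_sum, Complex.inv_re_eq_div, add_re, add_im,
    natCast_re, natCast_im, add_zero, ← Complex.natCast_log, ofReal_re]
  unfold digammaLowerBound
  linarith

lemma digammaLowerBound_sub_le_re_digamma_of_re_neg {z : ℂ} (hx : z.re < 0)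
    (hy : 16 ≤ z.im ^ 2) :
    digammaLowerBound (z.re + ⌈-z.re⌉₊) - z.re / (z.re ^ 2 + z.im ^ 2) ≤
      (Complex.digamma z).re := by
  have hz := Complex.ne_neg_natCast_of_im_ne_zero (s := z) fun h ↦ by norm_num [h] at hy
  have hm₀ : -z.re ≤ ⌈-z.re⌉₊ := Nat.le_ceil _
  have hm₁ : (⌈-z.re⌉₊ : ℝ) < -z.re + 1 := Nat.ceil_lt_add_one (by linarith)
  obtain ⟨k, hk⟩ : ∃ k, ⌈-z.re⌉₊ = k + 1 :=
    Nat.exists_eq_succ_of_ne_zero (Nat.ceil_pos.2 (by linarith)).ne'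
  have hB := digammaLowerBound_le_re_digamma (w := z + ⌈-z.re⌉₊)
    (by rw [add_re, natCast_re]; linarith) (by simpa using hy)
  have htail : ∑ j ∈ Finset.range k,
      (z.re + (j + 1 : ℕ)) / ((z.re + (j + 1 : ℕ)) ^ 2 + z.im ^ 2) ≤ 0 := by
    refine Finset.sum_nonpos fun j hj ↦ div_nonpos_of_nonpos_of_nonneg ?_ (by positivity)
    have : (j + 1 : ℝ) ≤ k := by exact_mod_cast Finset.mem_range.1 hj
    push_cast [hk] at hm₁ ⊢
    linarith
  rw [Complex.digamma_add_nat hz, hk, Finset.sum_range_succ'] at hB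
  simp only [add_re, re_sum, Complex.inv_re_eq_div, add_im, natCast_re, natCast_im, add_zero,
    Nat.cast_zero] at hB
  rw [hk]
  linarith

lemma log_pi_lt : Real.log π < 1.145 := by
  have h := Real.one_sub_inv_le_log_of_pos (show 0 < 32 / π ^ 3 by positivity)
  rw [Real.log_div (by norm_num) (by positivity), Real.log_pow, inv_div,
    show (32 : ℝ) = 2 ^ 5 by norm_num, Real.log_pow] at h
  have hπ : π ^ 3 < 3.1416 ^ 3 := pow_lt_pow_left₀ pi_lt_d4 pi_pos.le three_ne_zero
  norm_num at h hπ
  linarith [Real.log_two_lt_d9]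

lemma log_pi_add_lt_digammaLowerBound {e : ℝ} (he₀ : 0 ≤ e) (he : e ≤ 5 / 4) :
    Real.log π + 3 / 32 < digammaLowerBound e := by
  have hf {u v : ℝ} (hu : 0 ≤ u) (huv : u ≤ v) (hv : v ≤ 4) :
      u / (u ^ 2 + 16) ≤ v / (v ^ 2 + 16) :=
    monotoneOn_div_sq_add_sixteen ⟨hu, huv.trans hv⟩ ⟨hu.trans huv, hv⟩ huv
  have h32 : Real.log 32 = 5 * Real.log 2 := by
    rw [show (32 : ℝ) = 2 ^ 5 by norm_num, Real.log_pow, Nat.cast_ofNat]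
  have hπ := log_pi_lt
  have hlog2 := Real.log_two_gt_d9
  have h4 := div_sq_add_sixteen_le (e + 4)
  unfold digammaLowerBound
  simp only [Finset.sum_range_succ, Finset.sum_range_zero, Nat.cast_zero, Nat.cast_one,
    Nat.cast_ofNat, add_zero, zero_add]
  rcases le_total e (1 / 2) with he' | he'
  · have hlog : Real.log 32 ≤ Real.log ((e + 4) ^ 2 + 16) :=
      Real.log_le_log (by norm_num) (by nlinarith)
    have h0 := hf he₀ he' (by norm_num)
    have h1 := hf (by linarith) (by linarith : e + 1 ≤ 3 / 2) (by norm_num)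
    have h2 := hf (by linarith) (by linarith : e + 2 ≤ 5 / 2) (by norm_num)
    have h3 := hf (by linarith) (by linarith : e + 3 ≤ 7 / 2) (by norm_num)
    norm_num at h0 h1 h2 h3
    linarith
  · have hlog : Real.log 36.25 ≤ Real.log ((e + 4) ^ 2 + 16) :=
      Real.log_le_log (by norm_num) (by nlinarith)
    have h145 := Real.one_sub_inv_le_log_of_pos (show (0 : ℝ) < 145 / 128 by norm_num)
    rw [show (36.25 : ℝ) = 32 * (145 / 128) by norm_num,
      Real.log_mul (by norm_num) (by norm_num)] at hlog
    have h0 := hf he₀ he (by norm_num)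
    have h1 := hf (by linarith) (by linarith : e + 1 ≤ 9 / 4) (by norm_num)
    have h2 := hf (by linarith) (by linarith : e + 2 ≤ 13 / 4) (by norm_num)
    have h3 := div_sq_add_sixteen_le (e + 3)
    norm_num at h0 h1 h2 h145
    linarith

lemma div_sq_add_le_add {u h y : ℝ} (hh : 0 ≤ h) (hy : y ≠ 0) :
    (u + h) / ((u + h) ^ 2 + y ^ 2) ≤ u / (u ^ 2 + y ^ 2) + h / y ^ 2 := by
  have hy2 : 0 < y ^ 2 := by positivity
  have hq : 0 ≤ 3 * u ^ 2 + 3 * u * h + h ^ 2 := by nlinarith [sq_nonneg (2 * u + h)]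
  rw [div_add_div _ _ (by positivity) hy2.ne', div_le_div_iff₀ (by positivity) (by positivity)]
  nlinarith [mul_nonneg hh (add_nonneg (mul_nonneg hy2.le hq) (sq_nonneg (u * (u + h))))]

lemma log_pi_add_lt_re_digamma {z : ℂ} (hx : z.re < 5 / 4) (hy : 16 ≤ z.im ^ 2) :
    Real.log π + (3 / 2 - z.re) / ((3 / 2 - z.re) ^ 2 + z.im ^ 2) < (Complex.digamma z).re := by
  have hshift := div_sq_add_le_add (u := -z.re) (y := z.im) (by norm_num : (0 : ℝ) ≤ 3 / 2)
    fun h ↦ by norm_num [h] at hy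
  rw [neg_add_eq_sub, neg_sq, neg_div] at hshift
  have hy' : 3 / 2 / z.im ^ 2 ≤ 3 / 32 := by
    rw [div_le_div_iff₀ (by positivity) (by norm_num)]
    linarith
  rcases lt_or_ge z.re 0 with hx₀ | hx₀
  · have hm₀ : -z.re ≤ ⌈-z.re⌉₊ := Nat.le_ceil _
    have hm₁ : (⌈-z.re⌉₊ : ℝ) < -z.re + 1 := Nat.ceil_lt_add_one (by linarith)
    have := log_pi_add_lt_digammaLowerBound (e := z.re + ⌈-z.re⌉₊) (by linarith) (by linarith)
    linarith [digammaLowerBound_sub_le_re_digamma_of_re_neg hx₀ hy]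
  · have := log_pi_add_lt_digammaLowerBound hx₀ hx.le
    have : 0 ≤ z.re / (z.re ^ 2 + z.im ^ 2) := by positivity
    linarith [digammaLowerBound_le_re_digamma hx₀ hy]

theorem re_extra_terms_pos (s : ℂ) (hre : s.re < 1 / 2) (him : 8 ≤ |s.im|) :
    0 < (1 / (s - 1) + (1 / 2 : ℂ) * _root_.digamma (s / 2 + 1)).re
          - (1 / 2) * Real.log π := by
  set z := s / 2 + 1 with hz
  have hzre : z.re = s.re / 2 + 1 := by simp [z]
  have hzim : z.im = s.im / 2 := by simp [z]
  have hy : 16 ≤ z.im ^ 2 := by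
    rw [hzim, div_pow, ← sq_abs]
    nlinarith
  have hs : 1 / (s - 1) = (1 / 2 : ℂ) * (z - 3 / 2)⁻¹ := by
    rw [show z - 3 / 2 = (s - 1) / 2 by rw [hz]; ring, inv_div]
    ring
  have hhalf (w : ℂ) : ((1 / 2 : ℂ) * w).re = w.re / 2 := by
    rw [mul_comm, ← div_eq_mul_one_div, div_ofNat_re]
  have hinv : ((z - 3 / 2)⁻¹).re = -((3 / 2 - z.re) / ((3 / 2 - z.re) ^ 2 + z.im ^ 2)) := by
    rw [Complex.inv_re_eq_div, sub_re, sub_im, ← neg_div, neg_sub, div_ofNat_re, div_ofNat_im,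
      re_ofNat, im_ofNat, zero_div, sub_zero, ← neg_sq, neg_sub]
  have key := log_pi_add_lt_re_digamma (by linarith) hy
  rw [show _root_.digamma z = Complex.digamma z from rfl, hs, add_re, hhalf, hhalf, hinv]
  linarith
end

section
/- For every s = σ + it with t ≥ 0.1, one has |Re(Ψ(s)) - Re(Ψ(1-s))| < 3π·e^{-2πt}. -/
/-! Taking logarithmic derivatives in `Γ(s) Γ(1 - s) = π / sin (π s)` gives
`Ψ(s) - Ψ(1 - s) = -π cot (π s)`. With `w = exp (2π i s)` one has
`Re cot (π s) = Im ((1 + w) / (1 - w))`, and the Cayley map `w ↦ (1 + w) / (1 - w)` sends the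
circle `|w| = r < 1` onto the circle of radius `2r / (1 - r²)` centred on the real axis. Hence
`|Re (Ψ(s) - Ψ(1 - s))| ≤ 2πr / (1 - r²)` with `r = exp (-2π t)`, and for `t ≥ 0.1` we have
`r² < 1/3`, so this is less than `3πr`. -/

open Complex Real

theorem digamma_eq_complex_digamma (s : ℂ) : _root_.digamma s = Complex.digamma s := rfl

namespace Complex

lemma one_sub_mem_integerComplement {s : ℂ} (hs : s ∈ integerComplement) :
    1 - s ∈ integerComplement := by
  rintro ⟨n, hn⟩
  exact hs ⟨1 - n, by push_cast; rw [hn]; ring⟩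

lemma ne_neg_natCast_of_mem_integerComplement {s : ℂ} (hs : s ∈ integerComplement) (m : ℕ) :
    s ≠ -m :=
  fun hm => hs ⟨-m, by simp [hm]⟩

theorem digamma_sub_digamma_one_sub {s : ℂ} (hs : s ∈ integerComplement) :
    digamma s - digamma (1 - s) = -π * cot (π * s) := by
  have hn := ne_neg_natCast_of_mem_integerComplement hs
  have hn' := ne_neg_natCast_of_mem_integerComplement (one_sub_mem_integerComplement hs)
  have hlhs : logDeriv (fun z => Gamma z * Gamma (1 - z)) s = digamma s - digamma (1 - s) := by
    have h_one_sub : DifferentiableAt ℂ (fun z : ℂ => 1 - z) s := by fun_prop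
    rw [logDeriv_mul (g := fun z => Gamma (1 - z)) s (Gamma_ne_zero hn) (Gamma_ne_zero hn')
      (differentiableAt_Gamma _ hn) ((differentiableAt_Gamma _ hn').comp s h_one_sub),
      ← Function.comp_def Gamma, logDeriv_comp (differentiableAt_Gamma _ hn') h_one_sub]
    simp [digamma_def, sub_eq_add_neg]
  have hrhs : logDeriv (fun z => π / sin (π * z)) s = -π * cot (π * s) := by
    rw [logDeriv_div s (ofReal_ne_zero.2 pi_ne_zero) (sin_pi_mul_ne_zero hs) (by fun_prop)
      (by fun_prop), ← Function.comp_def sin, logDeriv_comp differentiableAt_sin (by fun_prop),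
      logDeriv_sin, logDeriv_const, Pi.zero_apply, deriv_const_mul_id]
    ring
  rw [← hlhs, ← hrhs, funext Gamma_mul_Gamma_one_sub]

lemma im_one_add_div_one_sub (w : ℂ) : ((1 + w) / (1 - w)).im = 2 * w.im / normSq (1 - w) := by
  simp only [div_im, add_re, add_im, sub_re, sub_im, one_re, one_im]
  ring

lemma abs_im_mul_one_sub_sq_norm_le (w : ℂ) : |w.im| * (1 - ‖w‖ ^ 2) ≤ ‖w‖ * normSq (1 - w) := by
  set r := ‖w‖
  have hxy : w.re ^ 2 + w.im ^ 2 = r ^ 2 := by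
    rw [Complex.sq_norm, normSq_apply]; ring
  have hnormSq : normSq (1 - w) = 1 + r ^ 2 - 2 * w.re := by
    rw [normSq_apply, sub_re, sub_im, one_re, one_im]; linear_combination hxy
  -- Cauchy–Schwarz for `(2r, 1 - r²)`, of length `1 + r²`, against `(re w, |im w|)`, of length `r`
  have hcs : 2 * r * w.re + (1 - r ^ 2) * |w.im| ≤ r * (1 + r ^ 2) := by
    have hlagrange : (r * (1 + r ^ 2)) ^ 2 - (2 * r * w.re + (1 - r ^ 2) * |w.im|) ^ 2 =
        ((1 - r ^ 2) * w.re - 2 * r * |w.im|) ^ 2 := by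
      linear_combination (-(1 + r ^ 2) ^ 2) * (hxy + sq_abs w.im)
    refine (abs_le_of_sq_le_sq' ?_ (by positivity)).2
    linarith [sq_nonneg ((1 - r ^ 2) * w.re - 2 * r * |w.im|)]
  rw [hnormSq]
  linarith

lemma abs_im_one_add_div_one_sub_le {w : ℂ} (hw : ‖w‖ < 1) :
    |((1 + w) / (1 - w)).im| ≤ 2 * ‖w‖ / (1 - ‖w‖ ^ 2) := by
  have hw1 : 0 < 1 - ‖w‖ ^ 2 := by nlinarith [norm_nonneg w]
  have hw0 : 0 < normSq (1 - w) := normSq_pos.2 (sub_ne_zero.2 fun h => by simp [← h] at hw)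
  rw [im_one_add_div_one_sub, abs_div, abs_mul, abs_two, abs_of_pos hw0,
    div_le_div_iff₀ hw0 hw1]
  nlinarith [abs_im_mul_one_sub_sq_norm_le w]

lemma abs_re_cot_le {z : ℂ} (hz : 0 < z.im) :
    |(cot z).re| ≤ 2 * rexp (-2 * z.im) / (1 - rexp (-2 * z.im) ^ 2) := by
  have hnorm : ‖exp (2 * I * z)‖ = rexp (-2 * z.im) := by
    rw [norm_exp]; congr 1; simp
  have hre : (cot z).re = ((1 + exp (2 * I * z)) / (1 - exp (2 * I * z))).im := by
    rw [cot_eq_exp_ratio, mul_comm I, ← div_div, div_I, neg_re, mul_I_re, neg_neg, add_comm]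
  rw [hre, ← hnorm]
  exact abs_im_one_add_div_one_sub_le (by rw [hnorm, Real.exp_lt_one_iff]; linarith)

end Complex

lemma exp_neg_two_pi_mul_sq_lt_one_third {t : ℝ} (ht : 0.1 ≤ t) :
    rexp (-2 * π * t) ^ 2 < 1 / 3 := by
  have hx : 1.25 ≤ 4 * π * t := by nlinarith [pi_gt_d2]
  have h3 : 3 < rexp (4 * π * t) := by
    nlinarith [quadratic_le_exp_of_nonneg (hx.trans' (by norm_num))]
  rw [← Real.exp_nat_mul, show ((2 : ℕ) : ℝ) * (-2 * π * t) = -(4 * π * t) by push_cast; ring,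
    Real.exp_neg, inv_lt_comm₀ (by positivity) (by norm_num), one_div, inv_inv]
  exact h3

theorem abs_re_digamma_sub_digamma_one_sub (s : ℂ) (ht : (0.1 : ℝ) ≤ s.im) :
    |(_root_.digamma s).re - (_root_.digamma (1 - s)).re| < 3 * π * Real.exp (-2 * π * s.im) := by
  have hs : 0 < s.im := by linarith
  have hπs : (π * s).im = π * s.im := by simp
  set r := rexp (-2 * π * s.im)
  have hr : 0 < r := exp_pos _
  have hr2 : r ^ 2 < 1 / 3 := exp_neg_two_pi_mul_sq_lt_one_third ht
  have hcot : |(cot (π * s)).re| ≤ 2 * r / (1 - r ^ 2) := by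
    have h := abs_re_cot_le (z := π * s) (by rw [hπs]; positivity)
    rwa [hπs, ← mul_assoc] at h
  rw [← sub_re, digamma_eq_complex_digamma, digamma_eq_complex_digamma,
    digamma_sub_digamma_one_sub (UpperHalfPlane.coe_mem_integerComplement ⟨s, hs⟩)]
  calc |(-π * cot (π * s)).re| = π * |(cot (π * s)).re| := by
        simp [abs_mul, abs_of_pos pi_pos]
    _ ≤ π * (2 * r / (1 - r ^ 2)) := by gcongr
    _ < π * (3 * r) := by
        gcongr
        rw [div_lt_iff₀ (by linarith)]
        nlinarith
    _ = 3 * π * r := by ring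
end
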